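/- arXiv:2202.03941 — 3 statements merged into one kernel-verified Lean document; each statement's English description precedes it below -/
import Mathlib

section
/- Let a₁,...,a_n ∈ ℂ be distinct, and for σ ∈ {0,1}ⁿ let h_σ(z) = Π_j (z − a_j)^(2σ_j − 1). Then there exists d ≤ 14^(2ⁿ) · n + 1 such that the 2ⁿ rational functions h_σ^d are linearly independent over ℂ. -/
open Polynomial

noncomputable section

local notation "K" => RatFunc ℂ
local notation "aM" => algebraMap (Polynomial ℂ) (RatFunc ℂ)

private lemma frac_wd {p q u v : ℂ[X]} (hq : q ≠ 0) (hv : v ≠ 0) (h : p * v = u * q) :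
    aM (q * derivative p - p * derivative q) / aM q ^ 2
      = aM (v * derivative u - u * derivative v) / aM v ^ 2 := by
  have h' : derivative p * v + p * derivative v = derivative u * q + u * derivative q := by
    have := congrArg derivative h
    simpa [derivative_mul] using this
  rw [div_eq_div_iff (pow_ne_zero 2 (RatFunc.algebraMap_ne_zero hq))
      (pow_ne_zero 2 (RatFunc.algebraMap_ne_zero hv)), ← map_pow, ← map_pow, ← map_mul, ← map_mul]
  refine congrArg _ ?_
  linear_combination (q * v) * h' - (derivative q * v + derivative v * q) * h

/-- derivative on rational functions -/
def Dfun (f : RatFunc ℂ) : RatFunc ℂ :=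
  aM (f.denom * derivative f.num - f.num * derivative f.denom) / aM f.denom ^ 2

lemma Dfun_div (p : ℂ[X]) {q : ℂ[X]} (hq : q ≠ 0) :
    Dfun (aM p / aM q) = aM (q * derivative p - p * derivative q) / aM q ^ 2 := by
  set x := aM p / aM q with hx
  have h1 : aM x.num / aM x.denom = aM p / aM q := by rw [RatFunc.num_div_denom]
  rw [div_eq_div_iff (RatFunc.algebraMap_ne_zero (RatFunc.denom_ne_zero x))
      (RatFunc.algebraMap_ne_zero hq), ← map_mul, ← map_mul] at h1
  have hrel : x.num * q = p * x.denom := RatFunc.algebraMap_injective ℂ h1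
  exact frac_wd (RatFunc.denom_ne_zero x) hq hrel

lemma Dfun_algebraMap (p : ℂ[X]) : Dfun (aM p) = aM (derivative p) := by
  have := Dfun_div p (one_ne_zero : (1:ℂ[X]) ≠ 0)
  simpa using this


lemma ratfunc_rep (f : RatFunc ℂ) : ∃ p q : ℂ[X], q ≠ 0 ∧ f = aM p / aM q :=
  ⟨f.num, f.denom, RatFunc.denom_ne_zero f, (RatFunc.num_div_denom f).symm⟩

lemma Dfun_add (f g : RatFunc ℂ) : Dfun (f + g) = Dfun f + Dfun g := by
  obtain ⟨p, q, hq, rfl⟩ := ratfunc_rep f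
  obtain ⟨u, v, hv, rfl⟩ := ratfunc_rep g
  have hq' := RatFunc.algebraMap_ne_zero hq
  have hv' := RatFunc.algebraMap_ne_zero hv
  have hsum : aM p / aM q + aM u / aM v = aM (p * v + q * u) / aM (q * v) := by
    rw [div_add_div _ _ hq' hv', ← map_mul, ← map_mul, ← map_mul, ← map_add]
  rw [hsum, Dfun_div _ (mul_ne_zero hq hv), Dfun_div _ hq, Dfun_div _ hv,
    div_add_div _ _ (pow_ne_zero 2 hq') (pow_ne_zero 2 hv'),
    div_eq_div_iff (pow_ne_zero 2 (RatFunc.algebraMap_ne_zero (mul_ne_zero hq hv)))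
      (mul_ne_zero (pow_ne_zero 2 hq') (pow_ne_zero 2 hv'))]
  simp only [← map_pow, ← map_mul, ← map_add]
  congr 1
  simp only [derivative_add, derivative_mul]
  ring

lemma Dfun_mul (f g : RatFunc ℂ) : Dfun (f * g) = f * Dfun g + g * Dfun f := by
  obtain ⟨p, q, hq, rfl⟩ := ratfunc_rep f
  obtain ⟨u, v, hv, rfl⟩ := ratfunc_rep g
  have hq' := RatFunc.algebraMap_ne_zero hq
  have hv' := RatFunc.algebraMap_ne_zero hv
  have hmul : aM p / aM q * (aM u / aM v) = aM (p * u) / aM (q * v) := by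
    rw [div_mul_div_comm, ← map_mul, ← map_mul]
  rw [hmul, Dfun_div _ (mul_ne_zero hq hv), Dfun_div _ hq, Dfun_div _ hv]
  rw [div_eq_iff (pow_ne_zero 2 (RatFunc.algebraMap_ne_zero (mul_ne_zero hq hv)))]
  field_simp
  simp only [derivative_mul, map_sub, map_mul, map_add, map_pow]
  ring

lemma Dfun_smul (c : ℂ) (f : RatFunc ℂ) : Dfun (c • f) = c • Dfun f := by
  obtain ⟨p, q, hq, rfl⟩ := ratfunc_rep f
  have hq' := RatFunc.algebraMap_ne_zero hq
  have hc : ∀ x : RatFunc ℂ, c • x = aM (Polynomial.C c) * x := by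
    intro x
    rw [Algebra.smul_def, RatFunc.algebraMap_C]
    rfl
  have hrep : c • (aM p / aM q) = aM (Polynomial.C c * p) / aM q := by
    rw [hc, map_mul, mul_div_assoc]
  rw [hrep, Dfun_div _ hq, Dfun_div _ hq, hc, ← mul_div_assoc, ← map_mul]
  congr 1
  simp only [derivative_mul, derivative_C]
  ring

/-- The derivation on `RatFunc ℂ` extending `d/dX`. -/
def Der : Derivation ℂ (RatFunc ℂ) (RatFunc ℂ) where
  toFun := Dfun
  map_add' := Dfun_add
  map_smul' := fun c f => Dfun_smul c f
  map_one_eq_zero' := by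
    have : (1 : RatFunc ℂ) = aM 1 := by rw [map_one]
    show Dfun 1 = 0
    rw [this, Dfun_algebraMap]
    simp
  leibniz' := fun f g => by
    simp only [smul_eq_mul]
    exact Dfun_mul f g

lemma Der_algebraMap (p : ℂ[X]) : Der (aM p) = aM (derivative p) := Dfun_algebraMap p

lemma Der_X_sub_C (c : ℂ) : Der (RatFunc.X - RatFunc.C c) = 1 := by
  have : RatFunc.X - RatFunc.C c = aM (Polynomial.X - Polynomial.C c) := by
    rw [map_sub, RatFunc.algebraMap_X, RatFunc.algebraMap_C]
  rw [this, Der_algebraMap]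
  simp

lemma Der_natCast (d : ℕ) : Der ((d : RatFunc ℂ)) = 0 := Derivation.map_natCast Der d

section Main
variable {n : ℕ} (a : Fin n → ℂ)

/-- the linear factors -/
def bfun (j : Fin n) : RatFunc ℂ := RatFunc.X - RatFunc.C (a j)

lemma bfun_eq (j : Fin n) : bfun a j = aM (Polynomial.X - Polynomial.C (a j)) := by
  rw [map_sub, RatFunc.algebraMap_X, RatFunc.algebraMap_C]
  rfl

lemma bfun_ne_zero (j : Fin n) : bfun a j ≠ 0 := by
  rw [bfun_eq]
  exact RatFunc.algebraMap_ne_zero (Polynomial.X_sub_C_ne_zero _)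

lemma Der_bfun (j : Fin n) : Der (bfun a j) = 1 := Der_X_sub_C (a j)

lemma Der_prod_zpow (s : Finset (Fin n)) (m : Fin n → ℤ) :
    Der (∏ j ∈ s, bfun a j ^ m j)
      = (∏ j ∈ s, bfun a j ^ m j) * ∑ j ∈ s, (m j : RatFunc ℂ) * (bfun a j)⁻¹ := by
  classical
  induction s using Finset.induction_on with
  | empty => simp
  | @insert j s hj ih =>
    rw [Finset.prod_insert hj, Finset.sum_insert hj, Derivation.leibniz, ih]
    have hD : Der (bfun a j ^ m j) = (m j : RatFunc ℂ) * (bfun a j)⁻¹ * bfun a j ^ m j := by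
      rw [Derivation.leibniz_zpow, Der_bfun, smul_eq_mul, mul_one, zsmul_eq_mul,
        zpow_sub_one₀ (bfun_ne_zero a j)]
      ring
    rw [hD, smul_eq_mul, smul_eq_mul]
    ring

lemma sum_inv_eq_zero (ha : Function.Injective a) (c : Fin n → ℤ)
    (h : ∑ j, (c j : RatFunc ℂ) * (bfun a j)⁻¹ = 0) : ∀ i, c i = 0 := by
  classical
  have key : (∑ j, (c j : ℂ[X]) * ∏ k ∈ Finset.univ.erase j,
      (Polynomial.X - Polynomial.C (a k))) = 0 := by
    apply RatFunc.algebraMap_injective ℂ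
    rw [map_zero, map_sum]
    have : ∀ j : Fin n, aM ((c j : ℂ[X]) * ∏ k ∈ Finset.univ.erase j,
        (Polynomial.X - Polynomial.C (a k)))
        = ((c j : RatFunc ℂ) * (bfun a j)⁻¹) * ∏ k, bfun a k := by
      intro j
      rw [map_mul, map_prod, map_intCast]
      have hprod : (∏ k, bfun a k) = bfun a j * ∏ k ∈ Finset.univ.erase j, bfun a k :=
        (Finset.mul_prod_erase _ _ (Finset.mem_univ j)).symm
      rw [hprod]
      have : ∏ k ∈ Finset.univ.erase j, aM (Polynomial.X - Polynomial.C (a k))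
          = ∏ k ∈ Finset.univ.erase j, bfun a k := by
        apply Finset.prod_congr rfl
        intro k _
        rw [bfun_eq]
      rw [this]
      field_simp [bfun_ne_zero a j]
    rw [Finset.sum_congr rfl fun j _ => this j, ← Finset.sum_mul, h, zero_mul]
  intro i
  have := congrArg (Polynomial.eval (a i)) key
  rw [Polynomial.eval_finset_sum, Polynomial.eval_zero] at this
  rw [Finset.sum_eq_single i] at this
  · rw [Polynomial.eval_mul, Polynomial.eval_intCast, Polynomial.eval_prod] at this
    simp only [Polynomial.eval_sub, Polynomial.eval_X, Polynomial.eval_C] at this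
    have hprod : (∏ k ∈ Finset.univ.erase i, (a i - a k)) ≠ 0 := by
      rw [Finset.prod_ne_zero_iff]
      intro k hk
      exact sub_ne_zero_of_ne fun hh => (Finset.mem_erase.mp hk).1 (ha hh.symm)
    have : (c i : ℂ) = 0 := by
      rcases mul_eq_zero.mp this with h1 | h1
      · exact h1
      · exact absurd h1 hprod
    exact_mod_cast this
  · intro j _ hji
    rw [Polynomial.eval_mul, Polynomial.eval_prod]
    apply mul_eq_zero_of_right
    apply Finset.prod_eq_zero (Finset.mem_erase.mpr ⟨Ne.symm hji, Finset.mem_univ i⟩)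
    simp
  · intro hi
    exact absurd (Finset.mem_univ i) hi

/-- exponent pattern -/
def expo (σ : Fin n → Fin 2) (j : Fin n) : ℤ := 2 * (σ j : ℤ) - 1

/-- the rational function `h_σ` -/
def hfun (σ : Fin n → Fin 2) : RatFunc ℂ := ∏ j, bfun a j ^ expo σ j

/-- its logarithmic derivative -/
def ell (σ : Fin n → Fin 2) : RatFunc ℂ := ∑ j, (expo σ j : RatFunc ℂ) * (bfun a j)⁻¹

lemma hfun_ne_zero (σ : Fin n → Fin 2) : hfun a σ ≠ 0 := by
  rw [hfun, Finset.prod_ne_zero_iff]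
  exact fun j _ => zpow_ne_zero _ (bfun_ne_zero a j)

lemma Der_hfun (σ : Fin n → Fin 2) : Der (hfun a σ) = ell a σ * hfun a σ := by
  rw [hfun, ell, Der_prod_zpow]
  ring

lemma ell_injective (ha : Function.Injective a) :
    Function.Injective (fun σ : Fin n → Fin 2 => ell a σ) := by
  intro σ τ h
  simp only [ell] at h
  have hz : ∑ j, ((expo σ j - expo τ j : ℤ) : RatFunc ℂ) * (bfun a j)⁻¹ = 0 := by
    push_cast
    simp only [sub_mul]
    rw [Finset.sum_sub_distrib]
    rw [sub_eq_zero]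
    exact_mod_cast h
  have := sum_inv_eq_zero a ha _ hz
  funext i
  have hi := this i
  have : (σ i : ℤ) = (τ i : ℤ) := by simp only [expo] at hi; omega
  omega

/-- coefficientwise derivative of a polynomial over `RatFunc ℂ` -/
def mapD (q : (RatFunc ℂ)[X]) : (RatFunc ℂ)[X] :=
  q.sum fun i c => Polynomial.C (Der c) * Polynomial.X ^ i

lemma coeff_mapD (q : (RatFunc ℂ)[X]) (j : ℕ) : (mapD q).coeff j = Der (q.coeff j) := by
  classical
  rw [mapD, Polynomial.coeff_sum]
  simp only [Polynomial.coeff_C_mul, Polynomial.coeff_X_pow]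
  rw [Polynomial.sum]
  rw [Finset.sum_eq_single j]
  · by_cases hj : j ∈ q.support
    · simp
    · simp [Polynomial.notMem_support_iff.mp hj]
  · intro b _ hbj
    simp [Ne.symm hbj]
  · intro hj
    simp [Polynomial.notMem_support_iff.mp hj]

lemma mapD_add (p q : (RatFunc ℂ)[X]) : mapD (p + q) = mapD p + mapD q := by
  ext j
  simp [coeff_mapD]

lemma mapD_monomial (i : ℕ) (c : RatFunc ℂ) :
    mapD (Polynomial.monomial i c) = Polynomial.monomial i (Der c) := by
  ext j
  simp only [coeff_mapD, Polynomial.coeff_monomial]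
  split <;> simp

lemma Der_eval (x : RatFunc ℂ) (hx : Der x = 0) (q : (RatFunc ℂ)[X]) :
    Der (q.eval x) = (mapD q).eval x := by
  induction q using Polynomial.induction_on' with
  | add p q hp hq => rw [mapD_add, Polynomial.eval_add, Polynomial.eval_add, map_add, hp, hq]
  | monomial i c =>
    rw [mapD_monomial, Polynomial.eval_monomial, Polynomial.eval_monomial, Derivation.leibniz]
    have hxi : Der (x ^ i) = 0 := by
      rw [Derivation.leibniz_pow, hx]
      simp
    rw [hxi, smul_eq_mul, smul_eq_mul]
    ring

/-- the iterated-derivative polynomials -/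
def Pm (u : RatFunc ℂ) : ℕ → (RatFunc ℂ)[X]
  | 0 => 1
  | k + 1 => mapD (Pm u k) + Polynomial.C u * Polynomial.X * Pm u k

lemma Pm_succ (u : RatFunc ℂ) (k : ℕ) :
    Pm u (k + 1) = mapD (Pm u k) + Polynomial.C u * Polynomial.X * Pm u k := rfl

lemma Pm_coeff_gt (u : RatFunc ℂ) : ∀ k j, k < j → (Pm u k).coeff j = 0 := by
  intro k
  induction k with
  | zero =>
    intro j hj
    show (1 : (RatFunc ℂ)[X]).coeff j = 0
    rw [Polynomial.coeff_one]
    simp [hj.ne']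
  | succ k ih =>
    intro j hj
    obtain ⟨j', rfl⟩ : ∃ j', j = j' + 1 := ⟨j - 1, by omega⟩
    rw [Pm_succ, Polynomial.coeff_add, coeff_mapD, mul_assoc, Polynomial.coeff_C_mul,
      Polynomial.coeff_X_mul, ih _ (by omega), ih _ (by omega)]
    simp

lemma Pm_coeff_eq (u : RatFunc ℂ) : ∀ k, (Pm u k).coeff k = u ^ k := by
  intro k
  induction k with
  | zero => simp [Pm]
  | succ k ih =>
    rw [Pm_succ, Polynomial.coeff_add, coeff_mapD, mul_assoc, Polynomial.coeff_C_mul,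
      Polynomial.coeff_X_mul, ih, Pm_coeff_gt u k (k+1) (by omega)]
    simp [pow_succ, mul_comm]

lemma Pm_natDegree_le (u : RatFunc ℂ) (k : ℕ) : (Pm u k).natDegree ≤ k :=
  Polynomial.natDegree_le_iff_coeff_eq_zero.mpr fun _ h => Pm_coeff_gt u k _ h

lemma iter_pow_eval (h ℓh : RatFunc ℂ) (hD : Der h = ℓh * h) (d : ℕ) :
    ∀ k, ((Der.toLinearMap : Module.End ℂ (RatFunc ℂ)) ^ k) (h ^ d)
      = h ^ d * (Pm ℓh k).eval ((d : ℕ) : RatFunc ℂ) := by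
  have hDd : Der (h ^ d) = ((d : ℕ) : RatFunc ℂ) * ℓh * h ^ d := by
    cases d with
    | zero => simp
    | succ m =>
      rw [Derivation.leibniz_pow, hD, smul_eq_mul, nsmul_eq_mul, Nat.add_sub_cancel]
      push_cast
      ring
  intro k
  induction k with
  | zero => simp [Pm]
  | succ k ih =>
    rw [pow_succ', Module.End.mul_apply, ih]
    show Der _ = _
    rw [Derivation.leibniz, smul_eq_mul, smul_eq_mul, hDd,
      Der_eval _ (Der_natCast d) _, Pm_succ, Polynomial.eval_add, Polynomial.eval_mul,
      Polynomial.eval_mul, Polynomial.eval_C, Polynomial.eval_X]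
    ring

lemma coeff_mul_of_le {p q : (RatFunc ℂ)[X]} {m k : ℕ} (hp : p.natDegree ≤ m)
    (hq : q.natDegree ≤ k) : (p * q).coeff (m + k) = p.coeff m * q.coeff k := by
  classical
  rw [Polynomial.coeff_mul, Finset.sum_eq_single (m, k)]
  · intro b hb hne
    rw [Finset.HasAntidiagonal.mem_antidiagonal] at hb
    by_cases hbm : b.1 ≤ m
    · have hk : k < b.2 := by
        rcases lt_or_eq_of_le hbm with h1 | h1
        · omega
        · exfalso; apply hne; rw [Prod.ext_iff]; constructor <;> omega
      rw [Polynomial.coeff_eq_zero_of_natDegree_lt (lt_of_le_of_lt hq hk), mul_zero]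
    · rw [Polynomial.coeff_eq_zero_of_natDegree_lt (lt_of_le_of_lt hp (by omega)), zero_mul]
  · intro hmem
    simp [Finset.mem_antidiagonal] at hmem

lemma coeff_prod_of_le {γ : Type*} (s : Finset γ) (p : γ → (RatFunc ℂ)[X]) (dg : γ → ℕ)
    (h : ∀ i ∈ s, (p i).natDegree ≤ dg i) :
    (∏ i ∈ s, p i).coeff (∑ i ∈ s, dg i) = ∏ i ∈ s, (p i).coeff (dg i) := by
  classical
  induction s using Finset.cons_induction with
  | empty => simp
  | cons i s his ih =>
    rw [Finset.prod_cons, Finset.sum_cons, coeff_mul_of_le (h i (Finset.mem_cons_self i s))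
      (le_trans (Polynomial.natDegree_prod_le s p)
        (Finset.sum_le_sum fun j hj => h j (Finset.mem_cons_of_mem hj))),
      ih fun j hj => h j (Finset.mem_cons_of_mem hj), Finset.prod_cons]

lemma coeff_prod_gt {γ : Type*} (s : Finset γ) (p : γ → (RatFunc ℂ)[X]) (dg : γ → ℕ)
    (h : ∀ i ∈ s, (p i).natDegree ≤ dg i) {N : ℕ} (hN : (∑ i ∈ s, dg i) < N) :
    (∏ i ∈ s, p i).coeff N = 0 :=
  Polynomial.coeff_eq_zero_of_natDegree_lt (lt_of_le_of_lt
    (le_trans (Polynomial.natDegree_prod_le s p) (Finset.sum_le_sum h)) hN)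

/-- fixed enumeration of sign patterns -/
def eIdx : (Fin n → Fin 2) ≃ Fin (Fintype.card (Fin n → Fin 2)) := Fintype.equivFin _

/-- the `d`-independent Wronskian coefficient matrix over `K[X]` -/
def MP : Matrix (Fin n → Fin 2) (Fin n → Fin 2) ((RatFunc ℂ)[X]) :=
  Matrix.of fun σ τ => Pm (ell a σ) ((eIdx (n := n)) τ : ℕ)

lemma coeff_detP :
    (MP a).det.coeff (∑ τ : Fin n → Fin 2, ((eIdx (n := n)) τ : ℕ))
      = Matrix.det (Matrix.of fun σ τ : Fin n → Fin 2 => ell a σ ^ ((eIdx (n := n)) τ : ℕ)) := by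
  classical
  rw [Matrix.det_apply', Matrix.det_apply', Polynomial.finset_sum_coeff]
  apply Finset.sum_congr rfl
  intro π _
  simp only [MP, Matrix.of_apply]
  rw [Polynomial.coeff_intCast_mul]
  congr 1
  rw [coeff_prod_of_le _ _ _ fun τ _ => Pm_natDegree_le _ _]
  apply Finset.prod_congr rfl
  intro τ _
  exact Pm_coeff_eq _ _

lemma detP_natDegree_le :
    (MP a).det.natDegree ≤ ∑ τ : Fin n → Fin 2, ((eIdx (n := n)) τ : ℕ) := by
  classical
  rw [Polynomial.natDegree_le_iff_coeff_eq_zero]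
  intro N hN
  rw [Matrix.det_apply', Polynomial.finset_sum_coeff]
  apply Finset.sum_eq_zero
  intro π _
  simp only [MP, Matrix.of_apply]
  rw [Polynomial.coeff_intCast_mul, coeff_prod_gt _ _ _ (fun τ _ => Pm_natDegree_le _ _) hN,
    mul_zero]

lemma detP_ne_zero (ha : Function.Injective a) : (MP a).det ≠ 0 := by
  intro h0
  have h1 := coeff_detP a
  rw [h0, Polynomial.coeff_zero] at h1
  have h2 : (Matrix.of fun σ τ : Fin n → Fin 2 => ell a σ ^ ((eIdx (n := n)) τ : ℕ))
      = (Matrix.vandermonde fun i => ell a ((eIdx (n := n)).symm i)).submatrix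
          (eIdx (n := n)) (eIdx (n := n)) := by
    ext σ τ
    simp [Matrix.vandermonde, Matrix.submatrix]
  rw [h2, Matrix.det_submatrix_equiv_self] at h1
  exact Matrix.det_vandermonde_ne_zero_iff.mpr
    ((ell_injective a ha).comp (eIdx (n := n)).symm.injective) h1.symm

lemma lin_indep_of_eval (d : ℕ)
    (hev : (MP a).det.eval ((d : ℕ) : RatFunc ℂ) ≠ 0) :
    LinearIndependent ℂ (fun σ : Fin n → Fin 2 => hfun a σ ^ d) := by
  classical
  by_contra hnl
  obtain ⟨cc, hsum, σ0, hσ0⟩ := Fintype.not_linearIndependent_iff.mp hnl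
  set Mden : Matrix (Fin n → Fin 2) (Fin n → Fin 2) (RatFunc ℂ) :=
    Matrix.of fun σ τ =>
      ((Der.toLinearMap : Module.End ℂ (RatFunc ℂ)) ^ ((eIdx (n := n)) τ : ℕ)) (hfun a σ ^ d)
    with hMden
  have hM : ∀ σ τ, Mden σ τ
      = hfun a σ ^ d * (Pm (ell a σ) ((eIdx (n := n)) τ : ℕ)).eval ((d : ℕ) : RatFunc ℂ) :=
    fun σ τ => iter_pow_eval _ _ (Der_hfun a σ) d _
  have hdet : Mden.det = (∏ σ : Fin n → Fin 2, hfun a σ ^ d)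
      * (MP a).det.eval ((d : ℕ) : RatFunc ℂ) := by
    have h1 : Mden = Matrix.of fun σ τ => (hfun a σ ^ d)
        * ((MP a).map (Polynomial.evalRingHom ((d : ℕ) : RatFunc ℂ))) σ τ := by
      ext σ τ
      rw [hM σ τ]
      rfl
    rw [h1, Matrix.det_mul_column]
    congr 1
    exact (RingHom.map_det (Polynomial.evalRingHom ((d : ℕ) : RatFunc ℂ)) (MP a)).symm
  have hvec : Matrix.vecMul (fun σ => algebraMap ℂ (RatFunc ℂ) (cc σ)) Mden = 0 := by
    funext τ
    show ∑ σ, algebraMap ℂ (RatFunc ℂ) (cc σ) * Mden σ τ = 0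
    set L := ((Der.toLinearMap : Module.End ℂ (RatFunc ℂ)) ^ ((eIdx (n := n)) τ : ℕ)) with hL
    have h2 : ∀ σ, algebraMap ℂ (RatFunc ℂ) (cc σ) * Mden σ τ = L (cc σ • hfun a σ ^ d) := by
      intro σ
      rw [map_smul, ← Algebra.smul_def]
      rfl
    rw [Finset.sum_congr rfl fun σ _ => h2 σ, ← map_sum, hsum, map_zero]
  have hvne : (fun σ => algebraMap ℂ (RatFunc ℂ) (cc σ)) ≠ 0 := by
    intro h0
    apply hσ0
    have := congrFun h0 σ0
    simpa using this
  have hdet0 : Mden.det = 0 := Matrix.exists_vecMul_eq_zero_iff.mp ⟨_, hvne, hvec⟩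
  rw [hdet] at hdet0
  rcases mul_eq_zero.mp hdet0 with h | h
  · rw [Finset.prod_eq_zero_iff] at h
    obtain ⟨σ, _, hσ⟩ := h
    exact pow_ne_zero d (hfun_ne_zero a σ) hσ
  · exact hev h

lemma exists_good_d (ha : Function.Injective a) :
    ∃ d, d ≤ (∑ τ : Fin n → Fin 2, ((eIdx (n := n)) τ : ℕ)) ∧
      (MP a).det.eval ((d : ℕ) : RatFunc ℂ) ≠ 0 := by
  classical
  haveI : CharZero (RatFunc ℂ) :=
    charZero_of_injective_algebraMap (algebraMap ℂ (RatFunc ℂ)).injective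
  set T := ∑ τ : Fin n → Fin 2, ((eIdx (n := n)) τ : ℕ) with hT
  by_contra hco
  push_neg at hco
  apply detP_ne_zero a ha
  apply Polynomial.eq_zero_of_natDegree_lt_card_of_eval_eq_zero' (MP a).det
      ((Finset.range (T + 1)).image (fun m => ((m : ℕ) : RatFunc ℂ)))
  · intro x hx
    obtain ⟨m, hm, rfl⟩ := Finset.mem_image.mp hx
    exact hco m (by simp at hm; omega)
  · rw [Finset.card_image_of_injective _ Nat.cast_injective, Finset.card_range]
    exact lt_of_le_of_lt (detP_natDegree_le a) (by omega)

lemma T_le_bound : (∑ τ : Fin n → Fin 2, ((eIdx (n := n)) τ : ℕ)) ≤ 14 ^ (2 ^ n) * n + 1 := by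
  classical
  have hN : Fintype.card (Fin n → Fin 2) = 2 ^ n := by simp
  have h1 : (∑ τ : Fin n → Fin 2, ((eIdx (n := n)) τ : ℕ)) ≤ 2 ^ n * 2 ^ n := by
    calc (∑ τ : Fin n → Fin 2, ((eIdx (n := n)) τ : ℕ))
        ≤ ∑ _τ : Fin n → Fin 2, 2 ^ n := by
          apply Finset.sum_le_sum
          intro τ _
          have := ((eIdx (n := n)) τ).isLt
          omega
      _ = 2 ^ n * 2 ^ n := by
          rw [Finset.sum_const, smul_eq_mul, Finset.card_univ, hN]
  rcases Nat.eq_zero_or_pos n with rfl | hn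
  · simpa using h1
  refine le_trans h1 (le_trans ?_ (Nat.le_succ _))
  calc 2 ^ n * 2 ^ n ≤ 2 ^ 2 ^ n * 2 ^ 2 ^ n :=
        Nat.mul_le_mul (Nat.pow_le_pow_right (by norm_num) (Nat.le_of_lt (Nat.lt_two_pow_self (n := n))))
          (Nat.pow_le_pow_right (by norm_num) (Nat.le_of_lt (Nat.lt_two_pow_self (n := n))))
    _ = 4 ^ 2 ^ n := by rw [← Nat.mul_pow]
    _ ≤ 14 ^ 2 ^ n := Nat.pow_le_pow_left (by norm_num) _
    _ ≤ 14 ^ 2 ^ n * n := Nat.le_mul_of_pos_right _ hn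

end Main

end

/-- For distinct `a₁,…,a_n ∈ ℂ`, there exists `d ≤ 14^(2ⁿ)·n + 1` such that the `2ⁿ`
rational functions `h_σ^d`, with `h_σ(z) = ∏_j (z − a_j)^(2σ_j − 1)`, are linearly
independent over `ℂ`. -/
theorem stmt_8 (n : ℕ) (a : Fin n → ℂ) (ha : Function.Injective a) :
    ∃ d : ℕ, d ≤ 14 ^ (2 ^ n) * n + 1 ∧
      LinearIndependent ℂ (fun σ : Fin n → Fin 2 =>
        (∏ j : Fin n, (RatFunc.X - RatFunc.C (a j)) ^ (2 * (σ j : ℤ) - 1)) ^ d) := by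
  obtain ⟨d, hdT, hev⟩ := exists_good_d a ha
  exact ⟨d, le_trans hdT T_le_bound, lin_indep_of_eval a d hev⟩
end

section
/- For odd n ≥ 3, if d is a positive integer such that (n−1)d + 1 < 2^(n−1), then the family of polynomials p_σ(z) = Π_j (z − a_j)^(2σ_j d), σ ∈ {0,1}ⁿ (with a_j distinct), is linearly dependent over ℂ. Equivalently, linear independence requires d ≥ (2^(n−1) − 1)/(n−1). -/
open Polynomial Finset

lemma flip_coe : ∀ x : Fin 2, (x : ℕ) + ((1 - x : Fin 2) : ℕ) = 1 := by decide

lemma fin2_flip_flip : ∀ x : Fin 2, 1 - (1 - x) = x := by decide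

lemma card_aux (m : ℕ) :
    Fintype.card {σ : Fin (2*m+1) → Fin 2 // (∑ j, (σ j : ℕ)) ≤ m} = 2 ^ (2*m) := by
  classical
  set p : (Fin (2*m+1) → Fin 2) → Prop := fun σ => (∑ j, (σ j : ℕ)) ≤ m with hp
  have hsum : ∀ σ : Fin (2*m+1) → Fin 2,
      (∑ j, (σ j : ℕ)) + (∑ j, ((1 - σ j : Fin 2) : ℕ)) = 2*m+1 := by
    intro σ
    rw [← Finset.sum_add_distrib]
    simp [flip_coe]
  have e : {σ // p σ} ≃ {σ // ¬ p σ} :=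
    { toFun := fun σ => ⟨fun j => 1 - σ.1 j, by
        have := hsum σ.1
        have h2 := σ.2
        simp only [hp] at h2 ⊢
        omega⟩
      invFun := fun σ => ⟨fun j => 1 - σ.1 j, by
        have := hsum σ.1
        have h2 := σ.2
        simp only [hp] at h2 ⊢
        omega⟩
      left_inv := fun σ => Subtype.ext (funext fun j => fin2_flip_flip (σ.1 j))
      right_inv := fun σ => Subtype.ext (funext fun j => fin2_flip_flip (σ.1 j)) }
  have hc := Fintype.card_congr e
  have hcompl := Fintype.card_subtype_compl p
  have htot : Fintype.card (Fin (2*m+1) → Fin 2) = 2 ^ (2*m+1) := by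
    simp [Fintype.card_fun]
  have hle : Fintype.card {σ // p σ} ≤ 2 ^ (2*m+1) := by
    rw [← htot]; exact Fintype.card_subtype_le _
  have h2 : (2:ℕ) ^ (2*m+1) = 2 * 2 ^ (2*m) := by ring
  set A := Fintype.card {σ // p σ} with hA
  set B := Fintype.card {σ // ¬ p σ} with hB
  omega

/-- For odd `n ≥ 3` and a positive integer `d` with `(n−1)d + 1 < 2^(n−1)`, the family of
polynomials `p_σ(z) = ∏_j (z − a_j)^(2σ_j d)`, `σ ∈ {0,1}ⁿ` (with `a_j` distinct), is
linearly dependent over `ℂ`. -/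
theorem stmt_10 (n : ℕ) (hodd : Odd n) (hn : 3 ≤ n) (d : ℕ) (hd : 1 ≤ d)
    (hsmall : (n - 1) * d + 1 < 2 ^ (n - 1))
    (a : Fin n → ℂ) (ha : Function.Injective a) :
    ¬ LinearIndependent ℂ (fun σ : Fin n → Fin 2 =>
      ∏ j : Fin n, (Polynomial.X - Polynomial.C (a j)) ^ (2 * (σ j : ℕ) * d)) := by
  classical
  intro hli
  obtain ⟨m, hm⟩ := hodd
  subst hm
  have hn1 : 2*m+1-1 = 2*m := rfl
  rw [hn1] at hsmall
  set N : ℕ := 2*m*d + 1 with hN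
  set S := {σ : Fin (2*m+1) → Fin 2 // (∑ j, (σ j : ℕ)) ≤ m} with hS
  have hli' : LinearIndependent ℂ (fun σ : S =>
      ∏ j : Fin (2*m+1), (X - C (a j)) ^ (2 * (σ.1 j : ℕ) * d)) :=
    hli.comp Subtype.val Subtype.val_injective
  have hmem : ∀ σ : S,
      (∏ j : Fin (2*m+1), (X - C (a j)) ^ (2 * (σ.1 j : ℕ) * d)) ∈ degreeLT ℂ N := by
    intro σ
    rw [mem_degreeLT]
    have hdeg : (∏ j : Fin (2*m+1), (X - C (a j)) ^ (2 * (σ.1 j : ℕ) * d)).natDegree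
        = ∑ j, 2 * (σ.1 j : ℕ) * d := by
      rw [Polynomial.natDegree_prod]
      · refine Finset.sum_congr rfl fun j _ => ?_
        rw [Polynomial.natDegree_pow, Polynomial.natDegree_X_sub_C, mul_one]
      · intro j _
        exact pow_ne_zero _ (X_sub_C_ne_zero (a j))
    have hlt : (∏ j : Fin (2*m+1), (X - C (a j)) ^ (2 * (σ.1 j : ℕ) * d)).natDegree < N := by
      rw [hdeg]
      have : ∑ j, 2 * (σ.1 j : ℕ) * d = 2 * (∑ j, (σ.1 j : ℕ)) * d := by
        rw [Finset.mul_sum, Finset.sum_mul]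
      rw [this]
      have := σ.2
      have : 2 * (∑ j, (σ.1 j : ℕ)) * d ≤ 2 * m * d := by
        apply Nat.mul_le_mul_right
        exact Nat.mul_le_mul_left _ this
      omega
    calc (∏ j : Fin (2*m+1), (X - C (a j)) ^ (2 * (σ.1 j : ℕ) * d)).degree
        ≤ ((∏ j : Fin (2*m+1), (X - C (a j)) ^ (2 * (σ.1 j : ℕ) * d)).natDegree : WithBot ℕ) :=
          degree_le_natDegree
      _ < (N : WithBot ℕ) := by exact_mod_cast hlt
  set v : S → degreeLT ℂ N := fun σ =>
    ⟨∏ j : Fin (2*m+1), (X - C (a j)) ^ (2 * (σ.1 j : ℕ) * d), hmem σ⟩ with hv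
  have hliv : LinearIndependent ℂ v := by
    apply LinearIndependent.of_comp (degreeLT ℂ N).subtype
    exact hli'
  have hliw : LinearIndependent ℂ ((degreeLTEquiv ℂ N).toLinearMap ∘ v) :=
    hliv.map' _ (degreeLTEquiv ℂ N).ker
  have hcard := hliw.fintype_card_le_finrank
  rw [Module.finrank_fin_fun, card_aux m] at hcard
  omega
end

section
/- Under inverse stereographic projection from the plane to the unit sphere (projecting from the north pole), a planar vector field V with V₁ + iV₂ = (X − iY)^d, expressed near the north pole in spherical coordinates (θ, φ) with z = cos θ, the pushed-forward vector field U = Dg⁻¹ ∘ V ∘ g satisfies: the tangential components U₁, U₂ scale as θ^(2−d) and U₃ scales as θ^(3−d) as θ → 0. In particular |U| → 0 at the north pole if d < 2, and |U| → ∞ if d > 2. -/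
set_option maxHeartbeats 1000000


open Real Filter

/-- Planar radius `R = sin θ / (1 − cos θ)` of the stereographic image of the point with
latitude `θ`. -/
noncomputable def stereoR (θ : ℝ) : ℝ := Real.sin θ / (1 - Real.cos θ)

/-- First component of the planar field `V` with `V₁ + iV₂ = (X − iY)^d`, in spherical
coordinates. -/
noncomputable def Vfield1 (d : ℕ) (θ φ : ℝ) : ℝ := stereoR θ ^ d * Real.cos (d * φ)

/-- Second component of the planar field `V` with `V₁ + iV₂ = (X − iY)^d`. -/
noncomputable def Vfield2 (d : ℕ) (θ φ : ℝ) : ℝ := -(stereoR θ ^ d) * Real.sin (d * φ)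

/-- The pushforward `U = Dg⁻¹ ∘ V ∘ g` of the planar field `V` to the unit sphere under
inverse stereographic projection, in spherical coordinates `(θ, φ)`. -/
noncomputable def Usph (d : ℕ) (θ φ : ℝ) : Fin 3 → ℝ :=
  ![(1 - Real.cos θ) * (Real.sin φ ^ 2 - Real.cos φ ^ 2 * Real.cos θ) * Vfield1 d θ φ
      - (1 / 2) * Real.sin (2 * φ) * Real.sin θ ^ 2 * Vfield2 d θ φ,
    -(1 / 2) * Real.sin (2 * φ) * Real.sin θ ^ 2 * Vfield1 d θ φ
      + (1 - Real.cos θ) * (Real.cos φ ^ 2 - Real.sin φ ^ 2 * Real.cos θ) * Vfield2 d θ φ,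
    (1 - Real.cos θ) * Real.cos φ * Real.sin θ * Vfield1 d θ φ
      + (1 - Real.cos θ) * Real.sin φ * Real.sin θ * Vfield2 d θ φ]

/-- The leading-order field `2^(d−1) θ^(2−d) (−cos((d+2)φ), −sin((d+2)φ), θ cos((d−1)φ))`
near the north pole. -/
noncomputable def Ulead (d : ℕ) (θ φ : ℝ) : Fin 3 → ℝ :=
  fun i => (2 : ℝ) ^ ((d : ℝ) - 1) * θ ^ ((2 : ℝ) - (d : ℝ)) *
    (![-Real.cos (((d : ℝ) + 2) * φ), -Real.sin (((d : ℝ) + 2) * φ),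
       θ * Real.cos (((d : ℝ) - 1) * φ)] i)

noncomputable def Af (d : ℕ) (θ : ℝ) : ℝ := (1 - Real.cos θ) * stereoR θ ^ d
noncomputable def Lf (d : ℕ) (θ : ℝ) : ℝ := (2:ℝ) ^ ((d:ℝ) - 1) * θ ^ ((2:ℝ) - (d:ℝ))

lemma Lf_pos (d : ℕ) {θ : ℝ} (h0 : 0 < θ) : 0 < Lf d θ :=
  mul_pos (Real.rpow_pos_of_pos two_pos _) (Real.rpow_pos_of_pos h0 _)

lemma A_est (d : ℕ) {θ : ℝ} (h0 : 0 < θ) (h1 : θ < 1/((d:ℝ)+1)) :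
    |Af d θ - Lf d θ| ≤ θ * Lf d θ := by
  set t := θ/2 with htdef
  have ht0 : 0 < t := by positivity
  have hdt : ((d:ℝ)+1) * θ < 1 := by
    rw [← lt_div_iff₀' (by positivity)]; exact h1
  have hθ1 : θ ≤ 1 := by nlinarith [Nat.cast_nonneg (α := ℝ) d]
  have ht12 : t ≤ 1/2 := by rw [htdef]; linarith
  have hs0 : 0 < Real.sin t := Real.sin_pos_of_pos_of_lt_pi ht0 (by linarith [Real.pi_gt_three])
  have hsu : Real.sin t ≤ t := Real.sin_le ht0.le
  have hsl : t * (1 - t^2) ≤ Real.sin t := by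
    have := Real.sin_gt_sub_cube ht0
    nlinarith
  have hcl : 1 - t^2 ≤ Real.cos t := by
    have := Real.one_sub_sq_div_two_le_cos (x := t)
    nlinarith
  have hcu : Real.cos t ≤ 1 := Real.cos_le_one t
  have hP0 : (0:ℝ) < 1 - t^2 := by nlinarith
  have hc0 : 0 < Real.cos t := lt_of_lt_of_le hP0 hcl
  have hθ2t : θ = 2*t := by rw [htdef]; ring
  have hcosθ : Real.cos θ = 1 - 2*Real.sin t^2 := by
    rw [hθ2t, Real.cos_two_mul', Real.cos_sq']; ring
  have hsinθ : Real.sin θ = 2*Real.sin t*Real.cos t := by rw [hθ2t, Real.sin_two_mul]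
  have hA : Af d θ = 2*Real.cos t^d*Real.sin t^2/Real.sin t^d := by
    rw [Af, stereoR, hcosθ, hsinθ]
    rw [show (1 - (1 - 2*Real.sin t^2)) = 2*Real.sin t^2 by ring]
    rw [show 2*Real.sin t*Real.cos t/(2*Real.sin t^2) = Real.cos t/Real.sin t by
      field_simp]
    rw [div_pow]
    field_simp
  have hL : Lf d θ = 2*t^2/t^d := by
    have e1 : (2:ℝ)^((d:ℝ)-1) = 2^d/2 := by
      rw [show ((d:ℝ) - 1) = ((d:ℕ):ℝ) - ((1:ℕ):ℝ) by norm_num,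
        Real.rpow_sub two_pos, Real.rpow_natCast, Real.rpow_natCast, pow_one]
    have e2 : θ^((2:ℝ)-(d:ℝ)) = θ^2/θ^d := by
      rw [show ((2:ℝ) - (d:ℝ)) = ((2:ℕ):ℝ) - ((d:ℕ):ℝ) by norm_num,
        Real.rpow_sub h0, Real.rpow_natCast, Real.rpow_natCast]
    have h2d : (0:ℝ) < 2^d := by positivity
    have htd : (0:ℝ) < t^d := by positivity
    have e3 : θ^d = 2^d*t^d := by rw [← mul_pow, show (2:ℝ)*t = θ by rw [hθ2t]]
    rw [Lf, e1, e2, e3]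
    field_simp
    ring
  have htd : (0:ℝ) < t^d := by positivity
  have hsd : (0:ℝ) < Real.sin t^d := by positivity
  -- key1 : Lf * (1-t^2)^(d+2) ≤ Af
  have hb1 : (1-t^2)^d ≤ Real.cos t^d := pow_le_pow_left₀ hP0.le hcl d
  have hb2 : Real.sin t^d ≤ t^d := pow_le_pow_left₀ hs0.le hsu d
  have key1 : Lf d θ * (1-t^2)^(d+2) ≤ Af d θ := by
    rw [hA, hL, div_mul_eq_mul_div, div_le_div_iff₀ htd hsd]
    have k1 : (1-t^2)^d * Real.sin t^d ≤ Real.cos t^d * t^d :=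
      mul_le_mul hb1 hb2 (by positivity) (by positivity)
    have k2 : (t*(1-t^2))*(t*(1-t^2)) ≤ Real.sin t * Real.sin t :=
      mul_le_mul hsl hsl (by positivity) hs0.le
    have k3 : ((1-t^2)^d * Real.sin t^d) * ((t*(1-t^2))*(t*(1-t^2)))
        ≤ (Real.cos t^d * t^d) * (Real.sin t * Real.sin t) :=
      mul_le_mul k1 k2 (by positivity) (by positivity)
    have e : (1-t^2)^(d+2) = (1-t^2)^d * ((1-t^2)*(1-t^2)) := by rw [pow_add]; ring
    rw [e]; nlinarith [k3]
  -- key2 : Af * (1-t^2)^d ≤ Lf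
  have key2 : Af d θ * (1-t^2)^d ≤ Lf d θ := by
    rw [hA, hL, div_mul_eq_mul_div, div_le_div_iff₀ hsd htd]
    have hb4 : (1-t^2)^d * t^d ≤ Real.sin t^d := by
      rw [← mul_pow]
      exact pow_le_pow_left₀ (by positivity) (by nlinarith) d
    have hb5 : Real.cos t^d ≤ 1 := pow_le_one₀ hc0.le hcu
    have k : (Real.cos t^d * ((1-t^2)^d * t^d)) * Real.sin t^2
        ≤ (1 * Real.sin t^d) * t^2 := by
      apply mul_le_mul (mul_le_mul hb5 hb4 (by positivity) (by norm_num))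
        (pow_le_pow_left₀ hs0.le hsu 2) (by positivity) (by positivity)
    nlinarith [k]
  -- Bernoulli
  have hB1 : 1 - ((d:ℝ)+2)*t^2 ≤ (1-t^2)^(d+2) := by
    have h := one_add_mul_le_pow (a := -t^2) (by nlinarith) (d+2)
    rw [show (1:ℝ) + -t^2 = 1 - t^2 by ring] at h
    push_cast at h; linarith
  have hB2 : 1 - (d:ℝ)*t^2 ≤ (1-t^2)^d := by
    have h := one_add_mul_le_pow (a := -t^2) (by nlinarith) d
    rw [show (1:ℝ) + -t^2 = 1 - t^2 by ring] at h
    linarith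
  have hd1t : ((d:ℝ)+1)*t < 1/2 := by rw [hθ2t] at hdt; nlinarith
  have hdt2 : 2*(d:ℝ)*t^2 ≤ θ := by nlinarith [Nat.cast_nonneg (α := ℝ) d]
  have hd2t2 : ((d:ℝ)+2)*t^2 ≤ θ := by nlinarith [Nat.cast_nonneg (α := ℝ) d]
  have hhalf : (1:ℝ)/2 ≤ (1-t^2)^d := by
    have : (d:ℝ)*t^2 ≤ 1/2 := by nlinarith [Nat.cast_nonneg (α := ℝ) d]
    linarith [hB2]
  have hLpos : 0 < Lf d θ := Lf_pos d h0
  have hApos : 0 ≤ Af d θ := by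
    rw [hA]
    apply div_nonneg _ hsd.le
    nlinarith [pow_pos hc0 d, sq_nonneg (Real.sin t)]
  have hA2L : Af d θ ≤ 2 * Lf d θ := by nlinarith [key2]
  rw [abs_sub_le_iff]
  constructor
  · -- Af - Lf ≤ θ Lf
    nlinarith [key2, mul_le_mul_of_nonneg_left hB2 hApos,
      mul_le_mul_of_nonneg_right hA2L (mul_nonneg (Nat.cast_nonneg (α := ℝ) d) (sq_nonneg t)),
      mul_le_mul_of_nonneg_left hdt2 hLpos.le]
  · -- Lf - Af ≤ θ Lf
    nlinarith [key1, mul_le_mul_of_nonneg_left hB1 hLpos.le,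
      mul_le_mul_of_nonneg_left hd2t2 hLpos.le]

lemma Usph0 (d : ℕ) (θ φ : ℝ) :
    Usph d θ φ 0 = Af d θ * (-Real.cos (((d:ℝ)+2)*φ)
      + (1 - Real.cos θ) * Real.cos φ * Real.cos (((d:ℝ)+1)*φ)) := by
  have e1 : ((d:ℝ)+2)*φ = (d:ℝ)*φ + 2*φ := by ring
  have e2 : ((d:ℝ)+1)*φ = (d:ℝ)*φ + φ := by ring
  simp only [Usph, Af, Vfield1, Vfield2, Matrix.cons_val_zero, e1, e2,
    Real.cos_add, Real.sin_add, Real.sin_two_mul, Real.cos_two_mul]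
  rw [Real.sin_sq θ, Real.sin_sq φ]
  ring

lemma Usph1 (d : ℕ) (θ φ : ℝ) :
    Usph d θ φ 1 = Af d θ * (-Real.sin (((d:ℝ)+2)*φ)
      + (1 - Real.cos θ) * Real.sin φ * Real.cos (((d:ℝ)+1)*φ)) := by
  have e1 : ((d:ℝ)+2)*φ = (d:ℝ)*φ + 2*φ := by ring
  have e2 : ((d:ℝ)+1)*φ = (d:ℝ)*φ + φ := by ring
  simp only [Usph, Af, Vfield1, Vfield2, Matrix.cons_val_one, Matrix.head_cons, Matrix.cons_val_zero, e1, e2,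
    Real.cos_add, Real.sin_add, Real.sin_two_mul, Real.cos_two_mul]
  linear_combination ((1-Real.cos θ)*stereoR θ^d*Real.sin ((d:ℝ)*φ)) * Real.sin_sq_add_cos_sq φ
    - (Real.sin φ*Real.cos φ*stereoR θ^d*Real.cos ((d:ℝ)*φ)) * Real.sin_sq_add_cos_sq θ

lemma Usph2 (d : ℕ) (θ φ : ℝ) :
    Usph d θ φ 2 = Af d θ * Real.sin θ * Real.cos (((d:ℝ)+1)*φ) := by
  have e2 : ((d:ℝ)+1)*φ = (d:ℝ)*φ + φ := by ring
  have h2 : Usph d θ φ 2 = (1 - Real.cos θ) * Real.cos φ * Real.sin θ * Vfield1 d θ φ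
      + (1 - Real.cos θ) * Real.sin φ * Real.sin θ * Vfield2 d θ φ := by simp [Usph]
  rw [h2]; simp only [Af, Vfield1, Vfield2, e2, Real.cos_add]; ring

lemma Ulead0 (d : ℕ) (θ φ : ℝ) :
    Ulead d θ φ 0 = Lf d θ * (-Real.cos (((d:ℝ)+2)*φ)) := by
  simp only [Ulead, Lf, Matrix.cons_val_zero]
lemma Ulead1 (d : ℕ) (θ φ : ℝ) :
    Ulead d θ φ 1 = Lf d θ * (-Real.sin (((d:ℝ)+2)*φ)) := by
  simp only [Ulead, Lf, Matrix.cons_val_one, Matrix.head_cons, Matrix.cons_val_zero]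
lemma Ulead2 (d : ℕ) (θ φ : ℝ) :
    Ulead d θ φ 2 = Lf d θ * (θ * Real.cos (((d:ℝ)-1)*φ)) := by
  have : (![-Real.cos (((d : ℝ) + 2) * φ), -Real.sin (((d : ℝ) + 2) * φ),
       θ * Real.cos (((d : ℝ) - 1) * φ)] : Fin 3 → ℝ) 2 = θ * Real.cos (((d : ℝ) - 1) * φ) := by
    simp
  simp only [Ulead, Lf, this]

lemma theta_Lf (d : ℕ) {θ : ℝ} (h0 : 0 < θ) :
    θ * Lf d θ = (2:ℝ)^((d:ℝ)-1) * θ^((3:ℝ)-(d:ℝ)) := by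
  rw [Lf, show ((3:ℝ)-(d:ℝ)) = 1 + ((2:ℝ)-(d:ℝ)) by ring, Real.rpow_add h0, Real.rpow_one]
  ring

lemma diff_bound (d : ℕ) (φ : ℝ) {θ : ℝ} (h0 : 0 < θ) (h1 : θ < 1/((d:ℝ)+1)) :
    ‖Usph d θ φ - Ulead d θ φ‖ ≤ 3 * (θ * Lf d θ) := by
  have hdt : ((d:ℝ)+1) * θ < 1 := by
    rw [← lt_div_iff₀' (by positivity)]; exact h1
  have hθ1 : θ ≤ 1 := by nlinarith [Nat.cast_nonneg (α := ℝ) d]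
  have hLpos : 0 < Lf d θ := Lf_pos d h0
  have hAL := A_est d h0 h1
  have hALle := abs_le.1 hAL
  have hA2L : Af d θ ≤ 2 * Lf d θ := by nlinarith [hALle.2]
  have hApos : 0 ≤ Af d θ := by nlinarith [hALle.1]
  have hz1 : 1 - Real.cos θ ≤ θ^2/2 := by
    nlinarith [Real.one_sub_sq_div_two_le_cos (x := θ)]
  have hz0 : 0 ≤ 1 - Real.cos θ := by nlinarith [Real.cos_le_one θ]
  have hsθu : Real.sin θ ≤ θ := Real.sin_le h0.le
  have hsθ0 : 0 < Real.sin θ :=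
    Real.sin_pos_of_pos_of_lt_pi h0 (by nlinarith [Real.pi_gt_three, Nat.cast_nonneg (α := ℝ) d])
  have hALs : |Lf d θ - Af d θ| ≤ θ * Lf d θ := by rw [abs_sub_comm]; exact hAL
  rw [pi_norm_le_iff_of_nonneg (by positivity)]
  intro i
  fin_cases i <;> simp only [Pi.sub_apply, Real.norm_eq_abs]
  · show |Usph d θ φ 0 - Ulead d θ φ 0| ≤ 3 * (θ * Lf d θ)
    rw [Usph0, Ulead0]
    rw [show Af d θ * (-Real.cos (((d:ℝ)+2)*φ)
          + (1 - Real.cos θ) * Real.cos φ * Real.cos (((d:ℝ)+1)*φ))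
        - Lf d θ * (-Real.cos (((d:ℝ)+2)*φ))
        = (Lf d θ - Af d θ) * Real.cos (((d:ℝ)+2)*φ)
          + Af d θ * ((1 - Real.cos θ) * (Real.cos φ * Real.cos (((d:ℝ)+1)*φ))) by ring]
    refine (abs_add_le _ _).trans ?_
    have b1 : |(Lf d θ - Af d θ) * Real.cos (((d:ℝ)+2)*φ)| ≤ θ * Lf d θ := by
      rw [abs_mul]
      nlinarith [Real.abs_cos_le_one (((d:ℝ)+2)*φ), abs_nonneg (Lf d θ - Af d θ)]
    have b2 : |Af d θ * ((1 - Real.cos θ) * (Real.cos φ * Real.cos (((d:ℝ)+1)*φ)))|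
        ≤ 2 * (θ * Lf d θ) := by
      rw [abs_mul, abs_of_nonneg hApos, abs_mul, abs_of_nonneg hz0, abs_mul]
      have c1 := Real.abs_cos_le_one φ
      have c2 := Real.abs_cos_le_one (((d:ℝ)+1)*φ)
      have c1n := abs_nonneg (Real.cos φ)
      have c2n := abs_nonneg (Real.cos (((d:ℝ)+1)*φ))
      have hcc : |Real.cos φ| * |Real.cos (((d:ℝ)+1)*φ)| ≤ 1 := mul_le_one₀ c1 c2n c2
      have hX : (1 - Real.cos θ) * (|Real.cos φ| * |Real.cos (((d:ℝ)+1)*φ)|) ≤ θ^2/2 := by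
        nlinarith [mul_le_mul_of_nonneg_left hcc hz0]
      have hXn : 0 ≤ (1 - Real.cos θ) * (|Real.cos φ| * |Real.cos (((d:ℝ)+1)*φ)|) := by positivity
      nlinarith [mul_le_mul hA2L hX hXn (by positivity), mul_le_mul_of_nonneg_left hθ1 hLpos.le,
        mul_pos h0 hLpos]
    linarith
  · show |Usph d θ φ 1 - Ulead d θ φ 1| ≤ 3 * (θ * Lf d θ)
    rw [Usph1, Ulead1]
    rw [show Af d θ * (-Real.sin (((d:ℝ)+2)*φ)
          + (1 - Real.cos θ) * Real.sin φ * Real.cos (((d:ℝ)+1)*φ))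
        - Lf d θ * (-Real.sin (((d:ℝ)+2)*φ))
        = (Lf d θ - Af d θ) * Real.sin (((d:ℝ)+2)*φ)
          + Af d θ * ((1 - Real.cos θ) * (Real.sin φ * Real.cos (((d:ℝ)+1)*φ))) by ring]
    refine (abs_add_le _ _).trans ?_
    have b1 : |(Lf d θ - Af d θ) * Real.sin (((d:ℝ)+2)*φ)| ≤ θ * Lf d θ := by
      rw [abs_mul]
      nlinarith [Real.abs_sin_le_one (((d:ℝ)+2)*φ), abs_nonneg (Lf d θ - Af d θ)]
    have b2 : |Af d θ * ((1 - Real.cos θ) * (Real.sin φ * Real.cos (((d:ℝ)+1)*φ)))|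
        ≤ 2 * (θ * Lf d θ) := by
      rw [abs_mul, abs_of_nonneg hApos, abs_mul, abs_of_nonneg hz0, abs_mul]
      have c1 := Real.abs_sin_le_one φ
      have c2 := Real.abs_cos_le_one (((d:ℝ)+1)*φ)
      have c1n := abs_nonneg (Real.sin φ)
      have c2n := abs_nonneg (Real.cos (((d:ℝ)+1)*φ))
      have hcc : |Real.sin φ| * |Real.cos (((d:ℝ)+1)*φ)| ≤ 1 := mul_le_one₀ c1 c2n c2
      have hX : (1 - Real.cos θ) * (|Real.sin φ| * |Real.cos (((d:ℝ)+1)*φ)|) ≤ θ^2/2 := by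
        nlinarith [mul_le_mul_of_nonneg_left hcc hz0]
      have hXn : 0 ≤ (1 - Real.cos θ) * (|Real.sin φ| * |Real.cos (((d:ℝ)+1)*φ)|) := by positivity
      nlinarith [mul_le_mul hA2L hX hXn (by positivity), mul_le_mul_of_nonneg_left hθ1 hLpos.le,
        mul_pos h0 hLpos]
    linarith
  · show |Usph d θ φ 2 - Ulead d θ φ 2| ≤ 3 * (θ * Lf d θ)
    rw [Usph2, Ulead2]
    refine (abs_sub _ _).trans ?_
    have b1 : |Af d θ * Real.sin θ * Real.cos (((d:ℝ)+1)*φ)| ≤ 2 * (θ * Lf d θ) := by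
      rw [abs_mul, abs_mul, abs_of_nonneg hApos, abs_of_nonneg hsθ0.le]
      have c2 := Real.abs_cos_le_one (((d:ℝ)+1)*φ)
      have c2n := abs_nonneg (Real.cos (((d:ℝ)+1)*φ))
      nlinarith [mul_le_mul hA2L hsθu hsθ0.le (by positivity),
        mul_le_mul_of_nonneg_right hA2L hsθ0.le, mul_pos h0 hLpos,
        mul_nonneg (mul_nonneg hApos hsθ0.le) c2n]
    have b2 : |Lf d θ * (θ * Real.cos (((d:ℝ)-1)*φ))| ≤ θ * Lf d θ := by
      rw [abs_mul, abs_of_nonneg hLpos.le, abs_mul, abs_of_nonneg h0.le]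
      have c2 := Real.abs_cos_le_one (((d:ℝ)-1)*φ)
      have c2n := abs_nonneg (Real.cos (((d:ℝ)-1)*φ))
      nlinarith [mul_pos h0 hLpos]
    linarith

/-- Near the north pole (`θ → 0`) the pushed-forward vector field `U` satisfies
`U = 2^(d−1) θ^(2−d) (1 + O(θ)) (−cos((d+2)φ), −sin((d+2)φ), θ cos((d−1)φ))`:
the tangential components scale as `θ^(2−d)` and the vertical one as `θ^(3−d)`.
In particular `|U| → 0` at the north pole when `d < 2` and `|U| → ∞` when `d > 2`. -/
theorem stmt_17 (d : ℕ) :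
    (∃ C > (0 : ℝ), ∃ ε > (0 : ℝ), ∀ θ φ : ℝ, 0 < θ → θ < ε →
      ‖Usph d θ φ - Ulead d θ φ‖ ≤ C * θ ^ ((3 : ℝ) - (d : ℝ))) ∧
    ((d : ℝ) < 2 → ∀ φ : ℝ,
      Tendsto (fun θ => ‖Usph d θ φ‖) (nhdsWithin 0 (Set.Ioi 0)) (nhds 0)) ∧
    (2 < (d : ℝ) → ∀ φ : ℝ,
      Tendsto (fun θ => ‖Usph d θ φ‖) (nhdsWithin 0 (Set.Ioi 0)) atTop) := by
  refine ⟨⟨3 * (2:ℝ)^((d:ℝ)-1), by positivity, 1/((d:ℝ)+1), by positivity, ?_⟩, ?_, ?_⟩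
  · intro θ φ h0 h1
    have := diff_bound d φ h0 h1
    rwa [theta_Lf d h0, ← mul_assoc] at this
  · -- d < 2
    intro hd φ
    have hp : 0 < (2:ℝ) - (d:ℝ) := by linarith
    have htend : Tendsto (fun θ:ℝ => 4 * Lf d θ) (nhdsWithin 0 (Set.Ioi 0)) (nhds 0) := by
      have hc : ContinuousAt (fun x:ℝ => x^((2:ℝ)-(d:ℝ))) 0 :=
        Real.continuousAt_rpow_const 0 _ (Or.inr hp.le)
      have h2 := hc.tendsto
      rw [Real.zero_rpow hp.ne'] at h2
      have h3 : Tendsto (fun θ:ℝ => 4 * (2:ℝ)^((d:ℝ)-1) * θ^((2:ℝ)-(d:ℝ)))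
          (nhdsWithin 0 (Set.Ioi 0)) (nhds (4 * (2:ℝ)^((d:ℝ)-1) * 0)) :=
        (h2.mono_left nhdsWithin_le_nhds).const_mul _
      rw [mul_zero] at h3
      refine h3.congr (fun θ => ?_)
      rw [Lf]; ring
    refine squeeze_zero' (Eventually.of_forall (fun θ => norm_nonneg _)) ?_ htend
    have hmem : Set.Ioo (0:ℝ) (1/((d:ℝ)+1)) ∈ nhdsWithin (0:ℝ) (Set.Ioi 0) :=
      Ioo_mem_nhdsGT_of_mem ⟨le_refl 0, by positivity⟩
    filter_upwards [hmem] with θ hθ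
    obtain ⟨h0, h1⟩ := hθ
    have hdt : ((d:ℝ)+1) * θ < 1 := by rw [← lt_div_iff₀' (by positivity)]; exact h1
    have hθ1 : θ ≤ 1 := by nlinarith [Nat.cast_nonneg (α := ℝ) d]
    have hLpos : 0 < Lf d θ := Lf_pos d h0
    have hUl : ‖Ulead d θ φ‖ ≤ Lf d θ := by
      rw [pi_norm_le_iff_of_nonneg hLpos.le]
      intro i
      fin_cases i <;> simp only [Real.norm_eq_abs]
      · show |Ulead d θ φ 0| ≤ Lf d θ
        rw [Ulead0, abs_mul, abs_of_nonneg hLpos.le, abs_neg]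
        nlinarith [Real.abs_cos_le_one (((d:ℝ)+2)*φ), abs_nonneg (Real.cos (((d:ℝ)+2)*φ))]
      · show |Ulead d θ φ 1| ≤ Lf d θ
        rw [Ulead1, abs_mul, abs_of_nonneg hLpos.le, abs_neg]
        nlinarith [Real.abs_sin_le_one (((d:ℝ)+2)*φ), abs_nonneg (Real.sin (((d:ℝ)+2)*φ))]
      · show |Ulead d θ φ 2| ≤ Lf d θ
        rw [Ulead2, abs_mul, abs_of_nonneg hLpos.le, abs_mul, abs_of_nonneg h0.le]
        nlinarith [mul_le_mul_of_nonneg_left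
          (mul_le_one₀ hθ1 (abs_nonneg (Real.cos (((d:ℝ)-1)*φ))) (Real.abs_cos_le_one (((d:ℝ)-1)*φ)))
          hLpos.le]
    have hdiff := diff_bound d φ h0 h1
    have hsplit : ‖Usph d θ φ‖ ≤ ‖Ulead d θ φ‖ + ‖Usph d θ φ - Ulead d θ φ‖ := by
      have he : Ulead d θ φ + (Usph d θ φ - Ulead d θ φ) = Usph d θ φ := by abel
      have h := norm_add_le (Ulead d θ φ) (Usph d θ φ - Ulead d θ φ)
      rwa [he] at h
    have : θ * Lf d θ ≤ Lf d θ := by nlinarith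
    linarith
  · -- d > 2
    intro hd φ
    have hp : 0 < (d:ℝ) - 2 := by linarith
    have hone : (1:ℝ)/2 ≤ |Real.cos (((d:ℝ)+2)*φ)| ∨ (1:ℝ)/2 ≤ |Real.sin (((d:ℝ)+2)*φ)| := by
      by_contra hcon
      push_neg at hcon
      nlinarith [Real.sin_sq_add_cos_sq (((d:ℝ)+2)*φ), sq_abs (Real.cos (((d:ℝ)+2)*φ)),
        sq_abs (Real.sin (((d:ℝ)+2)*φ)), abs_nonneg (Real.cos (((d:ℝ)+2)*φ)),
        abs_nonneg (Real.sin (((d:ℝ)+2)*φ)), hcon.1, hcon.2]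
    have hbase : Tendsto (fun θ:ℝ => (2:ℝ)^((d:ℝ)-1)/4 * ((fun θ:ℝ => θ^((d:ℝ)-2))⁻¹ θ))
        (nhdsWithin 0 (Set.Ioi 0)) atTop := by
      have hc : ContinuousAt (fun x:ℝ => x^((d:ℝ)-2)) 0 :=
        Real.continuousAt_rpow_const 0 _ (Or.inr hp.le)
      have h1 : Tendsto (fun θ:ℝ => θ^((d:ℝ)-2)) (nhdsWithin 0 (Set.Ioi 0))
          (nhdsWithin 0 (Set.Ioi 0)) := by
        rw [tendsto_nhdsWithin_iff]
        constructor
        · have h2 := hc.tendsto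
          rw [Real.zero_rpow hp.ne'] at h2
          exact h2.mono_left nhdsWithin_le_nhds
        · filter_upwards [self_mem_nhdsWithin] with θ hθ
          exact Set.mem_Ioi.2 (Real.rpow_pos_of_pos hθ _)
      exact (Filter.Tendsto.const_mul_atTop (by positivity) h1.inv_tendsto_nhdsGT_zero)
    refine tendsto_atTop_mono' _ ?_ hbase
    have hεpos : (0:ℝ) < min (1/((d:ℝ)+1)) (1/12) := by positivity
    have hmem : Set.Ioo (0:ℝ) (min (1/((d:ℝ)+1)) (1/12)) ∈ nhdsWithin (0:ℝ) (Set.Ioi 0) :=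
      Ioo_mem_nhdsGT_of_mem ⟨le_refl 0, hεpos⟩
    filter_upwards [hmem] with θ hθ
    obtain ⟨h0, hθε⟩ := hθ
    have h1 : θ < 1/((d:ℝ)+1) := lt_of_lt_of_le hθε (min_le_left _ _)
    have h12 : θ ≤ 1/12 := le_of_lt (lt_of_lt_of_le hθε (min_le_right _ _))
    have hLpos : 0 < Lf d θ := Lf_pos d h0
    have hdiff := diff_bound d φ h0 h1
    have hgoal : (2:ℝ)^((d:ℝ)-1)/4 * ((fun θ:ℝ => θ^((d:ℝ)-2))⁻¹ θ) = Lf d θ / 4 := by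
      have hinv : (θ^((d:ℝ)-2))⁻¹ = θ^((2:ℝ)-(d:ℝ)) := by
        rw [show ((2:ℝ)-(d:ℝ)) = -((d:ℝ)-2) by ring, Real.rpow_neg h0.le]
      simp only [Pi.inv_apply]
      rw [hinv, Lf]; ring
    rw [hgoal]
    have hθL : θ * Lf d θ ≤ (1/12) * Lf d θ := by nlinarith
    rcases hone with hcs | hcs
    · have low : Lf d θ/2 ≤ |Ulead d θ φ 0| := by
        rw [Ulead0, abs_mul, abs_of_nonneg hLpos.le, abs_neg]
        nlinarith
      have hd0 : |Usph d θ φ 0 - Ulead d θ φ 0| ≤ 3*(θ*Lf d θ) := by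
        have h := norm_le_pi_norm (Usph d θ φ - Ulead d θ φ) 0
        simp only [Pi.sub_apply, Real.norm_eq_abs] at h
        exact h.trans hdiff
      have habs := abs_sub_abs_le_abs_sub (Ulead d θ φ 0) (Usph d θ φ 0)
      rw [abs_sub_comm] at habs
      have hnorm : |Usph d θ φ 0| ≤ ‖Usph d θ φ‖ := by
        have h := norm_le_pi_norm (Usph d θ φ) 0
        rwa [Real.norm_eq_abs] at h
      nlinarith
    · have low : Lf d θ/2 ≤ |Ulead d θ φ 1| := by
        rw [Ulead1, abs_mul, abs_of_nonneg hLpos.le, abs_neg]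
        nlinarith
      have hd0 : |Usph d θ φ 1 - Ulead d θ φ 1| ≤ 3*(θ*Lf d θ) := by
        have h := norm_le_pi_norm (Usph d θ φ - Ulead d θ φ) 1
        simp only [Pi.sub_apply, Real.norm_eq_abs] at h
        exact h.trans hdiff
      have habs := abs_sub_abs_le_abs_sub (Ulead d θ φ 1) (Usph d θ φ 1)
      rw [abs_sub_comm] at habs
      have hnorm : |Usph d θ φ 1| ≤ ‖Usph d θ φ‖ := by
        have h := norm_le_pi_norm (Usph d θ φ) 1
        rwa [Real.norm_eq_abs] at h
      nlinarith
end
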